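/- Let r₁, r₂ > 0. Then, as ε → 0⁺, λ₂(ε) − (3/2)·(1/r₁³ + 1/r₂³)·(r₁r₂/(r₁+r₂))·log( 2r₁r₂ / ((r₁+r₂)·ε) ) = O(1); that is, this difference remains bounded as ε → 0⁺. -/

import Mathlib

/-!
Write `t = ξ₁ + ξ₂`, `R = r₁ r₂ / (r₁ + r₂)` and `S(a) = ∑ₙ e^{(2n+1)a} / (e^{(2n+1)t} - 1)`, so that
the three capacitance series are `S(ξ₂)`, `S(ξ₁)` and `S(0)`. Comparing `x / (eˣ - 1)` termwise with
`e^{-x}` and `e^{-x/2}` traps `t S(0)` between `artanh (e^{-t})` and `artanh (e^{-t/2})`, hence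
`t S(0) = -½ log t + O(1)`; and `S(0) ≤ S(ξ₂) ≤ S(0) + 1 / (2 sinh ξ₁) = S(0) + r₁ / (2α)`
(symmetrically for `S(ξ₁)`). So up to `O(1)` the rescaled capacitance matrix is the rank-one matrix
`6αS(0) [[r₁⁻³, -r₁⁻³], [-r₂⁻³, r₂⁻³]]`, whose nonzero eigenvalue is its trace, and
`λ₂ = 6αS(0) (r₁⁻³ + r₂⁻³) + O(1)` for every `ε > 0`. Finally `R ≤ α / t ≤ R + α` (from
`y / (1 + y) ≤ arsinh y ≤ y`), `α² / ε → 2R` and `α log α → 0` give `4αS(0) = -R log ε + O(1)`.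
-/

open Real Filter Topology

/-- Half-distance between the fixed points of the composed reflections. -/
noncomputable def alphaBi (r₁ r₂ ε : ℝ) : ℝ :=
  Real.sqrt (ε * (2 * r₁ + ε) * (2 * r₂ + ε) * (2 * r₁ + 2 * r₂ + ε)) /
    (2 * (r₁ + r₂ + ε))

/-- Bispherical coordinate of the boundary of the first sphere. -/
noncomputable def xi1 (r₁ r₂ ε : ℝ) : ℝ := Real.arsinh (alphaBi r₁ r₂ ε / r₁)

/-- Bispherical coordinate of the boundary of the second sphere. -/
noncomputable def xi2 (r₁ r₂ ε : ℝ) : ℝ := Real.arsinh (alphaBi r₁ r₂ ε / r₂)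

/-- Capacitance coefficient C₁₁. -/
noncomputable def C11 (r₁ r₂ ε : ℝ) : ℝ :=
  8 * π * alphaBi r₁ r₂ ε *
    ∑' n : ℕ, Real.exp ((2 * n + 1) * xi2 r₁ r₂ ε) /
      (Real.exp ((2 * n + 1) * (xi1 r₁ r₂ ε + xi2 r₁ r₂ ε)) - 1)

/-- Capacitance coefficient C₂₂. -/
noncomputable def C22 (r₁ r₂ ε : ℝ) : ℝ :=
  8 * π * alphaBi r₁ r₂ ε *
    ∑' n : ℕ, Real.exp ((2 * n + 1) * xi1 r₁ r₂ ε) /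
      (Real.exp ((2 * n + 1) * (xi1 r₁ r₂ ε + xi2 r₁ r₂ ε)) - 1)

/-- Capacitance coefficient C₁₂. -/
noncomputable def C12 (r₁ r₂ ε : ℝ) : ℝ :=
  -(8 * π * alphaBi r₁ r₂ ε *
    ∑' n : ℕ, 1 / (Real.exp ((2 * n + 1) * (xi1 r₁ r₂ ε + xi2 r₁ r₂ ε)) - 1))

/-- Capacitance coefficient C₂₁. -/
noncomputable def C21 (r₁ r₂ ε : ℝ) : ℝ := C12 r₁ r₂ ε

/-- Rescaled capacitance coefficient C̃₁₁ = (3/(4π r₁³)) C₁₁. -/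
noncomputable def Ct11 (r₁ r₂ ε : ℝ) : ℝ := 3 / (4 * π * r₁ ^ 3) * C11 r₁ r₂ ε

/-- Rescaled capacitance coefficient C̃₂₂ = (3/(4π r₂³)) C₂₂. -/
noncomputable def Ct22 (r₁ r₂ ε : ℝ) : ℝ := 3 / (4 * π * r₂ ^ 3) * C22 r₁ r₂ ε

/-- Rescaled capacitance coefficient C̃₁₂ = (3/(4π r₁³)) C₁₂. -/
noncomputable def Ct12 (r₁ r₂ ε : ℝ) : ℝ := 3 / (4 * π * r₁ ^ 3) * C12 r₁ r₂ ε

/-- Rescaled capacitance coefficient C̃₂₁ = (3/(4π r₂³)) C₂₁. -/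
noncomputable def Ct21 (r₁ r₂ ε : ℝ) : ℝ := 3 / (4 * π * r₂ ^ 3) * C21 r₁ r₂ ε

/-- Smaller eigenvalue of the rescaled capacitance matrix. -/
noncomputable def lam1 (r₁ r₂ ε : ℝ) : ℝ :=
  1 / 2 * (Ct11 r₁ r₂ ε + Ct22 r₁ r₂ ε -
    Real.sqrt ((Ct11 r₁ r₂ ε - Ct22 r₁ r₂ ε) ^ 2 + 4 * Ct12 r₁ r₂ ε * Ct21 r₁ r₂ ε))

/-- Larger eigenvalue of the rescaled capacitance matrix. -/
noncomputable def lam2 (r₁ r₂ ε : ℝ) : ℝ :=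
  1 / 2 * (Ct11 r₁ r₂ ε + Ct22 r₁ r₂ ε +
    Real.sqrt ((Ct11 r₁ r₂ ε - Ct22 r₁ r₂ ε) ^ 2 + 4 * Ct12 r₁ r₂ ε * Ct21 r₁ r₂ ε))

open Asymptotics

namespace Real

theorem hasSum_artanh {x : ℝ} (h : |x| < 1) :
    HasSum (fun k : ℕ => x ^ (2 * k + 1) / (2 * k + 1)) (artanh x) := by
  have hx := abs_lt.mp h
  rw [artanh_eq_half_log ⟨by linarith, by linarith⟩, log_div (by linarith) (by linarith)]
  convert (hasSum_log_sub_log_of_abs_lt_one h).mul_left (1 / 2) using 1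
  · rfl
  · funext k
    ring

theorem hasSum_exp_neg_odd_mul_div {s : ℝ} (hs : 0 < s) :
    HasSum (fun n : ℕ => exp (-((2 * n + 1) * s)) / (2 * n + 1)) (artanh (exp (-s))) := by
  have h : |exp (-s)| < 1 := by
    rw [abs_of_pos (exp_pos _), exp_lt_one_iff]; linarith
  convert hasSum_artanh h using 2 with n
  rw [← exp_nat_mul]; push_cast; ring_nf

theorem artanh_exp_neg_bounds {s : ℝ} (hs : 0 < s) :
    -log s / 2 ≤ artanh (exp (-s)) ∧ artanh (exp (-s)) ≤ (log (2 * (1 + s)) - log s) / 2 := by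
  have hy : 0 < exp (-s) := exp_pos _
  have hy1 : exp (-s) < 1 := by rw [exp_lt_one_iff]; linarith
  have hle : 1 - exp (-s) ≤ s := by linarith [add_one_le_exp (-s)]
  have hge : s / (1 + s) ≤ 1 - exp (-s) := by
    have : exp (-s) * (1 + s) ≤ 1 := by
      rw [exp_neg, inv_mul_le_one₀ (exp_pos s)]; linarith [add_one_le_exp s]
    rw [div_le_iff₀ (by linarith)]; linarith
  rw [artanh_eq_half_log ⟨by linarith, hy1.le⟩, log_div (by linarith) (by linarith)]
  have h1 : log (1 - exp (-s)) ≤ log s := log_le_log (by linarith) hle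
  have h2 : log s - log (1 + s) ≤ log (1 - exp (-s)) := by
    rw [← log_div hs.ne' (by linarith)]; exact log_le_log (by positivity) hge
  have h3 : 0 ≤ log (1 + exp (-s)) := log_nonneg (by linarith)
  have h4 : log (1 + exp (-s)) ≤ log 2 := log_le_log (by linarith) (by linarith)
  rw [log_mul two_ne_zero (by linarith)]
  constructor <;> linarith

theorem exp_neg_le_div_exp_sub_one {x : ℝ} (hx : 0 < x) : exp (-x) ≤ x / (exp x - 1) := by
  have hd : 0 < exp x - 1 := by linarith [add_one_le_exp x]
  rw [le_div_iff₀ hd, mul_sub, ← exp_add, neg_add_cancel, exp_zero, mul_one]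
  linarith [add_one_le_exp (-x)]

theorem div_exp_sub_one_le_exp_neg_half {x : ℝ} (hx : 0 < x) :
    x / (exp x - 1) ≤ exp (-(x / 2)) := by
  have hd : 0 < exp x - 1 := by linarith [add_one_le_exp x]
  have hsinh : x ≤ exp (x / 2) - exp (-(x / 2)) := by
    have := self_le_sinh_iff.mpr (by positivity : 0 ≤ x / 2)
    rw [sinh_eq] at this; linarith
  rw [div_le_iff₀ hd, mul_sub, ← exp_add, mul_one, neg_add_eq_sub, sub_half]
  exact hsinh

theorem hasSum_exp_neg_odd_mul {b : ℝ} (hb : 0 < b) :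
    HasSum (fun n : ℕ => exp (-((2 * n + 1) * b))) (1 / (2 * sinh b)) := by
  have hr : exp (-(2 * b)) < 1 := by rw [exp_lt_one_iff]; linarith
  convert (hasSum_geometric_of_lt_one (exp_nonneg _) hr).mul_left (exp (-b)) using 1
  · rfl
  · funext n
    rw [← exp_nat_mul, ← exp_add]; congr 1; ring
  · have : 1 < exp b := one_lt_exp_iff.mpr hb
    rw [sinh_eq, show -(2 * b) = -b + -b by ring, exp_add, exp_neg b]
    field_simp

theorem div_exp_sub_one_sub_le {u v : ℝ} (hv : 0 < v) (huv : u ≤ v) :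
    (exp u - 1) / (exp v - 1) ≤ exp (u - v) := by
  have hd : 0 < exp v - 1 := by linarith [add_one_le_exp v]
  rw [div_le_iff₀ hd, mul_sub, ← exp_add, sub_add_cancel, mul_one, sub_le_sub_iff_left]
  exact exp_le_one_iff.mpr (by linarith)

theorem arsinh_le_self {y : ℝ} (hy : 0 ≤ y) : arsinh y ≤ y := by
  simpa only [arsinh_sinh] using arsinh_le_arsinh.mpr (self_le_sinh_iff.mpr hy)

theorem div_one_add_le_arsinh {y : ℝ} (hy : 0 ≤ y) : y / (1 + y) ≤ arsinh y := by
  have hlog : y / (1 + y) ≤ log (1 + y) := by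
    have h : 1 - (1 + y)⁻¹ = y / (1 + y) := by field_simp; ring
    exact h ▸ one_sub_inv_le_log_of_pos (by linarith)
  refine hlog.trans (log_le_log (by linarith) ?_)
  linarith [one_le_sqrt.mpr (by nlinarith : 1 ≤ 1 + y ^ 2)]

theorem sqrt_sq_add_le_sqrt_sq_add_add_abs_sub (x y : ℝ) {c : ℝ} (hc : 0 ≤ c) :
    √(x ^ 2 + c) ≤ √(y ^ 2 + c) + |x - y| := by
  have hy : |y| ≤ √(y ^ 2 + c) := by
    rw [← sqrt_sq_eq_abs]; exact sqrt_le_sqrt (by linarith)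
  have hs := sq_sqrt (by positivity : 0 ≤ y ^ 2 + c)
  have hyx : y * (x - y) ≤ √(y ^ 2 + c) * |x - y| := by
    calc y * (x - y) ≤ |y| * |x - y| := by rw [← abs_mul]; exact le_abs_self _
      _ ≤ _ := by gcongr
  rw [sqrt_le_left (by positivity)]
  nlinarith [sq_abs (x - y)]

theorem abs_sqrt_sq_add_sub_sqrt_sq_add_le (x y : ℝ) {c : ℝ} (hc : 0 ≤ c) :
    |√(x ^ 2 + c) - √(y ^ 2 + c)| ≤ |x - y| := by
  rw [abs_sub_le_iff]
  constructor
  · linarith [sqrt_sq_add_le_sqrt_sq_add_add_abs_sub x y hc]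
  · linarith [sqrt_sq_add_le_sqrt_sq_add_add_abs_sub y x hc, abs_sub_comm x y]

end Real

/-- The series in `C₁₁`, `C₂₂` and `C₁₂` are `capSum a (ξ₁ + ξ₂)` with `a = ξ₂`, `ξ₁` and `0`. -/
noncomputable def capSum (a t : ℝ) : ℝ :=
  ∑' n : ℕ, exp ((2 * n + 1) * a) / (exp ((2 * n + 1) * t) - 1)

section capSum

variable {a t : ℝ}

theorem exp_odd_mul_sub_one_pos (n : ℕ) (ht : 0 < t) : 0 < exp ((2 * n + 1) * t) - 1 := by
  have : 0 < (2 * n + 1 : ℝ) * t := by positivity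
  linarith [add_one_le_exp ((2 * n + 1) * t)]

theorem mul_one_div_exp_odd_mul_sub_one (n : ℕ) :
    t * (1 / (exp ((2 * n + 1) * t) - 1)) =
      (2 * n + 1) * t / (exp ((2 * n + 1) * t) - 1) / (2 * n + 1) := by
  field_simp

theorem summable_mul_one_div_exp_odd_mul_sub_one (ht : 0 < t) :
    Summable fun n : ℕ => t * (1 / (exp ((2 * n + 1) * t) - 1)) := by
  refine (hasSum_exp_neg_odd_mul_div (half_pos ht)).summable.of_nonneg_of_le
    (fun n => (mul_pos ht (one_div_pos.mpr (exp_odd_mul_sub_one_pos n ht))).le) fun n => ?_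
  rw [mul_one_div_exp_odd_mul_sub_one n]
  gcongr
  simpa only [mul_div_assoc] using
    div_exp_sub_one_le_exp_neg_half (x := (2 * n + 1) * t) (by positivity)

theorem capSum_zero (t : ℝ) : capSum 0 t = ∑' n : ℕ, 1 / (exp ((2 * n + 1) * t) - 1) := by
  simp only [capSum, mul_zero, exp_zero]

theorem mul_capSum_zero_bounds (ht : 0 < t) :
    -log t / 2 ≤ t * capSum 0 t ∧ t * capSum 0 t ≤ (log (2 * (2 + t)) - log t) / 2 := by
  have hsum := summable_mul_one_div_exp_odd_mul_sub_one ht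
  have hG := hasSum_exp_neg_odd_mul_div ht
  have hG₂ := hasSum_exp_neg_odd_mul_div (half_pos ht)
  rw [capSum_zero, ← tsum_mul_left]
  constructor
  · refine (artanh_exp_neg_bounds ht).1.trans ?_
    rw [← hG.tsum_eq]
    refine hG.summable.tsum_le_tsum (fun n => ?_) hsum
    rw [mul_one_div_exp_odd_mul_sub_one n]
    gcongr
    exact exp_neg_le_div_exp_sub_one (x := (2 * n + 1) * t) (by positivity)
  · refine le_trans ?_ (artanh_exp_neg_bounds (half_pos ht)).2 |>.trans_eq ?_
    · rw [← hG₂.tsum_eq]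
      refine hsum.tsum_le_tsum (fun n => ?_) hG₂.summable
      rw [mul_one_div_exp_odd_mul_sub_one n]
      gcongr
      simpa only [mul_div_assoc] using
    div_exp_sub_one_le_exp_neg_half (x := (2 * n + 1) * t) (by positivity)
    · rw [log_div ht.ne' two_ne_zero, show 2 * (1 + t / 2) = 2 + t by ring,
        log_mul two_ne_zero (by positivity)]
      ring

theorem capSum_nonneg (ht : 0 < t) : 0 ≤ capSum a t :=
  tsum_nonneg fun n => div_nonneg (exp_nonneg _) (exp_odd_mul_sub_one_pos n ht).le

theorem capSum_term_le (n : ℕ) (hat : a < t) (ht : 0 < t) :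
    exp ((2 * n + 1) * a) / (exp ((2 * n + 1) * t) - 1) ≤
      1 / (exp ((2 * n + 1) * t) - 1) + exp (-((2 * n + 1) * (t - a))) := by
  have hsplit : exp ((2 * n + 1) * a) / (exp ((2 * n + 1) * t) - 1) =
      1 / (exp ((2 * n + 1) * t) - 1) +
        (exp ((2 * n + 1) * a) - 1) / (exp ((2 * n + 1) * t) - 1) := by
    have := exp_odd_mul_sub_one_pos n ht
    field_simp
    ring
  rw [hsplit, show -((2 * n + 1) * (t - a)) = (2 * n + 1) * a - (2 * n + 1) * t by ring]
  gcongr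
  exact div_exp_sub_one_sub_le (v := (2 * n + 1) * t) (by positivity) (by gcongr)

theorem capSum_bounds (ha : 0 ≤ a) (hat : a < t) :
    capSum 0 t ≤ capSum a t ∧ capSum a t ≤ capSum 0 t + 1 / (2 * sinh (t - a)) := by
  have ht : 0 < t := ha.trans_lt hat
  have hS₀ : Summable fun n : ℕ => 1 / (exp ((2 * n + 1) * t) - 1) :=
    (summable_mul_left_iff ht.ne').mp (summable_mul_one_div_exp_odd_mul_sub_one ht)
  have hgeom := hasSum_exp_neg_odd_mul (sub_pos.mpr hat)
  have hS : Summable fun n : ℕ => exp ((2 * n + 1) * a) / (exp ((2 * n + 1) * t) - 1) :=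
    (hS₀.add hgeom.summable).of_nonneg_of_le
      (fun n => div_nonneg (exp_nonneg _) (exp_odd_mul_sub_one_pos n ht).le)
      fun n => capSum_term_le n hat ht
  rw [capSum_zero]
  constructor
  · refine hS₀.tsum_le_tsum (fun n => ?_) hS
    gcongr
    · exact (exp_odd_mul_sub_one_pos n ht).le
    · exact one_le_exp (by positivity)
  · rw [← hgeom.tsum_eq, ← hS₀.tsum_add hgeom.summable]
    exact hS.tsum_le_tsum (fun n => capSum_term_le n hat ht) (hS₀.add hgeom.summable)

theorem isBigO_mul_capSum_zero_add_log :
    (fun t => t * capSum 0 t + log t / 2) =O[𝓝[>] 0] fun _ => (1 : ℝ) := by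
  refine .of_bound (log 6 / 2) ?_
  filter_upwards [Ioo_mem_nhdsGT one_pos] with t ⟨ht, ht1⟩
  obtain ⟨hlo, hhi⟩ := mul_capSum_zero_bounds ht
  have : log (2 * (2 + t)) ≤ log 6 := log_le_log (by positivity) (by linarith)
  rw [norm_one, mul_one, Real.norm_eq_abs, abs_le]
  constructor <;> linarith

end capSum

section arsinh

variable {α r₁ r₂ : ℝ}

theorem mul_arsinh_add_arsinh_le (hα : 0 ≤ α) (hr₁ : 0 < r₁) (hr₂ : 0 < r₂) :
    r₁ * r₂ / (r₁ + r₂) * (arsinh (α / r₁) + arsinh (α / r₂)) ≤ α := by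
  have h₁ := arsinh_le_self (div_nonneg hα hr₁.le)
  have h₂ := arsinh_le_self (div_nonneg hα hr₂.le)
  calc r₁ * r₂ / (r₁ + r₂) * (arsinh (α / r₁) + arsinh (α / r₂))
      ≤ r₁ * r₂ / (r₁ + r₂) * (α / r₁ + α / r₂) := by gcongr
    _ = α := by field_simp; ring

theorem le_add_mul_arsinh_add_arsinh (hα : 0 ≤ α) (hr₁ : 0 < r₁) (hr₂ : 0 < r₂) :
    α ≤ (r₁ * r₂ / (r₁ + r₂) + α) * (arsinh (α / r₁) + arsinh (α / r₂)) := by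
  have hy₁ : 0 ≤ α / r₁ := div_nonneg hα hr₁.le
  have hy₂ : 0 ≤ α / r₂ := div_nonneg hα hr₂.le
  have hd : 0 < 1 + (α / r₁ + α / r₂) := by positivity
  have h₁ : α / r₁ / (1 + (α / r₁ + α / r₂)) ≤ arsinh (α / r₁) :=
    (div_le_div_of_nonneg_left hy₁ (by linarith) (by linarith)).trans (div_one_add_le_arsinh hy₁)
  have h₂ : α / r₂ / (1 + (α / r₁ + α / r₂)) ≤ arsinh (α / r₂) :=
    (div_le_div_of_nonneg_left hy₂ (by linarith) (by linarith)).trans (div_one_add_le_arsinh hy₂)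
  calc α = (r₁ * r₂ / (r₁ + r₂) + α) *
        (α / r₁ / (1 + (α / r₁ + α / r₂)) + α / r₂ / (1 + (α / r₁ + α / r₂))) := by
        field_simp; ring
    _ ≤ _ := by gcongr

end arsinh

noncomputable def xiSum (r₁ r₂ ε : ℝ) : ℝ := xi1 r₁ r₂ ε + xi2 r₁ r₂ ε

section alphaBi

variable {r₁ r₂ ε : ℝ}

theorem alphaBi_pos (hr₁ : 0 < r₁) (hr₂ : 0 < r₂) (hε : 0 < ε) : 0 < alphaBi r₁ r₂ ε := by
  unfold alphaBi
  have : 0 < ε * (2 * r₁ + ε) * (2 * r₂ + ε) * (2 * r₁ + 2 * r₂ + ε) := by positivity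
  positivity

theorem xiSum_pos (hr₁ : 0 < r₁) (hr₂ : 0 < r₂) (hε : 0 < ε) : 0 < xiSum r₁ r₂ ε := by
  have hα := alphaBi_pos hr₁ hr₂ hε
  exact add_pos (arsinh_pos_iff.mpr (by positivity)) (arsinh_pos_iff.mpr (by positivity))

theorem tendsto_alphaBi (hr₁ : 0 < r₁) (hr₂ : 0 < r₂) :
    Tendsto (alphaBi r₁ r₂) (𝓝[>] 0) (𝓝[>] 0) := by
  have hcont : ContinuousAt (alphaBi r₁ r₂) 0 := by
    unfold alphaBi
    exact ContinuousAt.div (by fun_prop) (by fun_prop) (by positivity)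
  refine tendsto_nhdsWithin_iff.mpr ⟨?_, eventually_nhdsWithin_of_forall fun ε hε =>
    alphaBi_pos hr₁ hr₂ hε⟩
  simpa [alphaBi] using hcont.tendsto.mono_left nhdsWithin_le_nhds

theorem tendsto_alphaBi_sq_div (hr₁ : 0 < r₁) (hr₂ : 0 < r₂) :
    Tendsto (fun ε => alphaBi r₁ r₂ ε ^ 2 / ε) (𝓝[>] 0) (𝓝 (2 * (r₁ * r₂ / (r₁ + r₂)))) := by
  set g : ℝ → ℝ := fun ε =>
    (2 * r₁ + ε) * (2 * r₂ + ε) * (2 * r₁ + 2 * r₂ + ε) / (4 * (r₁ + r₂ + ε) ^ 2)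
  have hg : Tendsto g (𝓝 0) (𝓝 (2 * (r₁ * r₂ / (r₁ + r₂)))) := by
    have : ContinuousAt g 0 := ContinuousAt.div (by fun_prop) (by fun_prop) (by positivity)
    convert this.tendsto using 2
    simp only [g]
    field_simp
    ring
  refine (hg.mono_left nhdsWithin_le_nhds).congr' ?_
  filter_upwards [self_mem_nhdsWithin] with ε (hε : 0 < ε)
  simp only [g]
  rw [alphaBi, div_pow, sq_sqrt (by positivity)]
  field_simp
  ring

theorem tendsto_xiSum (hr₁ : 0 < r₁) (hr₂ : 0 < r₂) :
    Tendsto (xiSum r₁ r₂) (𝓝[>] 0) (𝓝[>] 0) := by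
  have hcont : Continuous fun a => arsinh (a / r₁) + arsinh (a / r₂) :=
    (continuous_arsinh.comp (continuous_id.div_const _)).add
      (continuous_arsinh.comp (continuous_id.div_const _))
  refine tendsto_nhdsWithin_iff.mpr ⟨?_, eventually_nhdsWithin_of_forall fun ε hε =>
    xiSum_pos hr₁ hr₂ hε⟩
  exact (hcont.tendsto' 0 0 (by simp)).comp
    ((tendsto_alphaBi hr₁ hr₂).mono_right nhdsWithin_le_nhds)

theorem isBigO_alphaBi_div_xiSum_sub (hr₁ : 0 < r₁) (hr₂ : 0 < r₂) :
    (fun ε => alphaBi r₁ r₂ ε / xiSum r₁ r₂ ε - r₁ * r₂ / (r₁ + r₂)) =O[𝓝[>] 0]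
      alphaBi r₁ r₂ := by
  refine .of_bound 1 (eventually_nhdsWithin_of_forall fun ε (hε : 0 < ε) => ?_)
  have hα := alphaBi_pos hr₁ hr₂ hε
  have ht := xiSum_pos hr₁ hr₂ hε
  have hlo := mul_arsinh_add_arsinh_le hα.le hr₁ hr₂
  have hhi := le_add_mul_arsinh_add_arsinh hα.le hr₁ hr₂
  simp only [xiSum, xi1, xi2] at ht ⊢
  rw [one_mul, Real.norm_eq_abs, Real.norm_eq_abs, abs_of_pos hα, abs_le, le_sub_iff_add_le,
    sub_le_iff_le_add, div_le_iff₀ ht, le_div_iff₀ ht]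
  constructor <;> linarith

end alphaBi

/-- The larger eigenvalue `½ (a + d + √((a - d)² + 4 b e))` of `[[a, -b], [-e, d]]`, compared with
that of the rank-one matrix `[[b, -b], [-e, e]]`, which is its trace `b + e`. -/
theorem abs_half_add_sqrt_sub_le (a d b e : ℝ) (hb : 0 ≤ b) (he : 0 ≤ e) :
    |1 / 2 * (a + d + √((a - d) ^ 2 + 4 * b * e)) - (b + e)| ≤ |a - b| + |d - e| := by
  have hbe : √((b - e) ^ 2 + 4 * b * e) = b + e := by
    rw [show (b - e) ^ 2 + 4 * b * e = (b + e) ^ 2 by ring, sqrt_sq (by positivity)]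
  have hsqrt := abs_sqrt_sq_add_sub_sqrt_sq_add_le (a - d) (b - e) (by positivity : 0 ≤ 4 * b * e)
  rw [hbe] at hsqrt
  have htri : |a - d - (b - e)| ≤ |a - b| + |d - e| := by
    rw [show a - d - (b - e) = (a - b) - (d - e) by ring]; exact abs_sub _ _
  rw [abs_le] at hsqrt ⊢
  constructor <;> linarith [hsqrt.1, hsqrt.2, le_abs_self (a - b), neg_abs_le (a - b),
    le_abs_self (d - e), neg_abs_le (d - e)]

theorem abs_rescaled_capSum_sub_le {α r a t : ℝ} (hα : 0 < α) (hr : 0 < r) (ha : 0 ≤ a)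
    (hat : a < t) (hsinh : sinh (t - a) = α / r) :
    |3 / (4 * π * r ^ 3) * (8 * π * α * capSum a t) - 6 * α * capSum 0 t / r ^ 3| ≤ 3 / r ^ 2 := by
  obtain ⟨hlo, hhi⟩ := capSum_bounds ha hat
  rw [hsinh] at hhi
  have hdiff : 3 / (4 * π * r ^ 3) * (8 * π * α * capSum a t) - 6 * α * capSum 0 t / r ^ 3 =
      6 * α / r ^ 3 * (capSum a t - capSum 0 t) := by
    field_simp; ring
  have hbound : 6 * α / r ^ 3 * (1 / (2 * (α / r))) = 3 / r ^ 2 := by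
    field_simp; ring
  rw [hdiff, abs_of_nonneg (by have := sub_nonneg.mpr hlo; positivity), ← hbound]
  gcongr
  linarith

section capacitance

variable {r₁ r₂ ε : ℝ}

theorem C12_eq : C12 r₁ r₂ ε = -(8 * π * alphaBi r₁ r₂ ε * capSum 0 (xiSum r₁ r₂ ε)) := by
  rw [capSum_zero]; rfl

theorem abs_lam2_sub_le (hr₁ : 0 < r₁) (hr₂ : 0 < r₂) (hε : 0 < ε) :
    |lam2 r₁ r₂ ε - 6 * alphaBi r₁ r₂ ε * capSum 0 (xiSum r₁ r₂ ε) * (1 / r₁ ^ 3 + 1 / r₂ ^ 3)| ≤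
      3 / r₁ ^ 2 + 3 / r₂ ^ 2 := by
  set α := alphaBi r₁ r₂ ε
  set u := 6 * α * capSum 0 (xiSum r₁ r₂ ε)
  have hα : 0 < α := alphaBi_pos hr₁ hr₂ hε
  have hξ₁ : 0 < xi1 r₁ r₂ ε := arsinh_pos_iff.mpr (by positivity)
  have hξ₂ : 0 < xi2 r₁ r₂ ε := arsinh_pos_iff.mpr (by positivity)
  have hu : 0 ≤ u := by have := capSum_nonneg (a := 0) (xiSum_pos hr₁ hr₂ hε); positivity
  have h₁₁ : |Ct11 r₁ r₂ ε - u / r₁ ^ 3| ≤ 3 / r₁ ^ 2 :=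
    abs_rescaled_capSum_sub_le hα hr₁ hξ₂.le (lt_add_of_pos_left _ hξ₁)
      (by rw [add_sub_cancel_right]; exact sinh_arsinh _)
  have h₂₂ : |Ct22 r₁ r₂ ε - u / r₂ ^ 3| ≤ 3 / r₂ ^ 2 :=
    abs_rescaled_capSum_sub_le hα hr₂ hξ₁.le (lt_add_of_pos_right _ hξ₂)
      (by rw [add_sub_cancel_left]; exact sinh_arsinh _)
  have h₁₂ : 4 * Ct12 r₁ r₂ ε * Ct21 r₁ r₂ ε = 4 * (u / r₁ ^ 3) * (u / r₂ ^ 3) := by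
    simp only [Ct12, Ct21, C21, C12_eq, u, α]
    field_simp
    ring
  rw [show u * (1 / r₁ ^ 3 + 1 / r₂ ^ 3) = u / r₁ ^ 3 + u / r₂ ^ 3 by ring]
  unfold lam2
  rw [h₁₂]
  exact (abs_half_add_sqrt_sub_le _ _ _ _ (by positivity) (by positivity)).trans
    (add_le_add h₁₁ h₂₂)

end capacitance


theorem isBigO_four_mul_alphaBi_mul_capSum_sub_log {r₁ r₂ : ℝ} (hr₁ : 0 < r₁) (hr₂ : 0 < r₂) :
    (fun ε => 4 * alphaBi r₁ r₂ ε * capSum 0 (xiSum r₁ r₂ ε) -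
        r₁ * r₂ / (r₁ + r₂) * log (2 * r₁ * r₂ / ((r₁ + r₂) * ε))) =O[𝓝[>] 0]
      fun _ => (1 : ℝ) := by
  have hα₀ := (tendsto_alphaBi hr₁ hr₂).mono_right nhdsWithin_le_nhds
  have hrate := isBigO_alphaBi_div_xiSum_sub hr₁ hr₂
  have hα₂ := tendsto_alphaBi_sq_div hr₁ hr₂
  have ht := tendsto_xiSum hr₁ hr₂
  set R := r₁ * r₂ / (r₁ + r₂) with hR
  set α := alphaBi r₁ r₂
  set t := xiSum r₁ r₂
  have hratio : Tendsto (fun ε => α ε / t ε) (𝓝[>] 0) (𝓝 R) := by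
    simpa only [sub_add_cancel, zero_add] using (hrate.trans_tendsto hα₀).add_const R
  have h₁ : (fun ε => α ε / t ε * (t ε * capSum 0 (t ε) + log (t ε) / 2)) =O[𝓝[>] 0]
      fun _ => (1 : ℝ) := by
    simpa using (hratio.isBigO_one ℝ).mul
      (isBigO_mul_capSum_zero_add_log.comp_tendsto ht)
  have h₂ : (fun ε => α ε / t ε * log (α ε / t ε)) =O[𝓝[>] 0] fun _ => (1 : ℝ) :=
    ((continuous_mul_log.tendsto R).comp hratio).isBigO_one ℝ
  have h₃ : (fun ε => (α ε / t ε - R) * log (α ε)) =O[𝓝[>] 0] fun _ => (1 : ℝ) :=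
    (hrate.mul (isBigO_refl (fun ε => log (α ε)) _)).trans
      (((continuous_mul_log.tendsto' 0 0 (by simp)).comp hα₀).isBigO_one ℝ)
  have h₄ : (fun ε => log (α ε ^ 2 / ε)) =O[𝓝[>] 0] fun _ => (1 : ℝ) :=
    (hα₂.log (by positivity)).isBigO_one ℝ
  refine (((((h₁.const_mul_left 4).add (h₂.const_mul_left 2)).sub (h₃.const_mul_left 2)).sub
    (h₄.const_mul_left R)).sub (isBigO_const_one ℝ (R * log (2 * R)) _)).congr' ?_ .rfl
  filter_upwards [self_mem_nhdsWithin] with ε (hε : 0 < ε)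
  have hαε : 0 < α ε := alphaBi_pos hr₁ hr₂ hε
  have htε : 0 < t ε := xiSum_pos hr₁ hr₂ hε
  rw [log_div hαε.ne' htε.ne', log_div (by positivity) hε.ne', log_pow,
    show 2 * r₁ * r₂ / ((r₁ + r₂) * ε) = 2 * R / ε by rw [hR]; field_simp,
    log_div (by positivity) hε.ne']
  field_simp
  ring

theorem lam2_asymptotics (r₁ r₂ : ℝ) (hr₁ : 0 < r₁) (hr₂ : 0 < r₂) :
    (fun ε => lam2 r₁ r₂ ε -
        3 / 2 * (1 / r₁ ^ 3 + 1 / r₂ ^ 3) * (r₁ * r₂ / (r₁ + r₂)) *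
          Real.log (2 * r₁ * r₂ / ((r₁ + r₂) * ε))) =O[𝓝[>] (0 : ℝ)]
      (fun _ => (1 : ℝ)) := by
  have hlam : (fun ε => lam2 r₁ r₂ ε -
      6 * alphaBi r₁ r₂ ε * capSum 0 (xiSum r₁ r₂ ε) * (1 / r₁ ^ 3 + 1 / r₂ ^ 3)) =O[𝓝[>] 0]
      fun _ => (1 : ℝ) :=
    .of_bound (3 / r₁ ^ 2 + 3 / r₂ ^ 2) (eventually_nhdsWithin_of_forall fun ε hε => by
      simpa using abs_lam2_sub_le hr₁ hr₂ hε)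
  refine (hlam.add ((isBigO_four_mul_alphaBi_mul_capSum_sub_log hr₁ hr₂).const_mul_left
    (3 / 2 * (1 / r₁ ^ 3 + 1 / r₂ ^ 3)))).congr_left fun ε => ?_
  ring
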